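/- Let V₁, …, Vₙ (n = 2^k) be finite-dimensional vector spaces and let t ∈ V₁ ⊗ ⋯ ⊗ Vₙ be such that for every dyadic interval D ⊆ {1, …, n}, the flattening rank of t with respect to D is at most r. Then for every j with 0 ≤ j ≤ n, the flattening rank of t with respect to the initial segment {1, …, j} is at most r^{⌈k/2⌉}. (That is, HF(r, k) ⊆ TT(r^{⌈k/2⌉}, 2^k) for the left-to-right leaf ordering.) -/

import Mathlib

/-- The flattening of a tensor `t ∈ V₁ ⊗ ⋯ ⊗ Vₙ` (given in coordinates, `V_i = 𝕜^{d i}`)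
with respect to a subset `S` of the factors: the matrix of the linear map
`(⊗_{l∈S} V_l)* → ⊗_{l∉S} V_l` obtained by contraction with `t`. -/
def flattening {𝕜 : Type*} [Field 𝕜] {ι : Type*} [Fintype ι] [DecidableEq ι]
    (d : ι → ℕ) (S : Finset ι) (t : (∀ i, Fin (d i)) → 𝕜) :
    Matrix (∀ i : {i // i ∈ S}, Fin (d i.1)) (∀ i : {i // i ∉ S}, Fin (d i.1)) 𝕜 :=
  fun a b => t fun i => if h : i ∈ S then a ⟨i, h⟩ else b ⟨i, h⟩

/-- The flattening rank of a tensor with respect to a subset `S` of the factors. -/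
noncomputable def flatteningRank {𝕜 : Type*} [Field 𝕜] {ι : Type*} [Fintype ι] [DecidableEq ι]
    (d : ι → ℕ) (S : Finset ι) (t : (∀ i, Fin (d i)) → 𝕜) : ℕ :=
  (flattening d S t).rank

/-! Write `j` in binary. The initial segment `[0, j)` is the disjoint union of one dyadic interval
for each `1`-bit `s < k` of `j` (the left sibling of the level-`s` block containing `j`), and its
complement `[j, 2^k)` is `{j}` together with one dyadic interval for each `0`-bit `s < k` of `j`
(the right sibling of the level-`s` block containing `j`). Flattening ranks are submultiplicative
over disjoint unions of factors and do not change under complementation, so the flattening rank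
of `[0, j)` is at most `r ^ #ones` and at most `r ^ (#zeros + 1)`. These exponents add up to
`k + 1`, so the smaller one is at most `⌈k/2⌉`. -/

namespace Matrix

open Set Submodule

variable {𝕜 : Type*} [Field 𝕜]

theorem rank_eq_zero_iff {m n : Type*} [Fintype m] [Fintype n] (A : Matrix m n 𝕜) :
    A.rank = 0 ↔ A = 0 := by
  rw [A.rank_eq_finrank_span_row, finrank_eq_zero, span_eq_bot, forall_mem_range]
  exact ⟨fun h => funext h, fun h a => congr_fun h a⟩

theorem exists_fin_rank_span_rows_eq {m n : Type*} [Fintype m] [Fintype n] (A : Matrix m n 𝕜) :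
    ∃ x : Fin A.rank → m, span 𝕜 (range fun p => A (x p)) = span 𝕜 (range A.row) := by
  obtain ⟨f, hf, hspan, -⟩ := exists_fun_fin_finrank_span_eq 𝕜 (range A.row)
  choose x hx using hf
  rw [A.rank_eq_finrank_span_row]
  exact ⟨x, by rwa [← funext hx] at hspan⟩

/-- If the rows `x p` span the row space of the first matrix and the rows `y q` span that of the
second, then every row `M (a, b)` lies in the span of the rows `M (x p, y q)`. -/
theorem rank_prod_rows_le {α β γ : Type*} [Fintype α] [Fintype β] [Fintype γ]
    (M : Matrix (α × β) γ 𝕜) :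
    M.rank ≤ (of fun a (bc : β × γ) => M (a, bc.1) bc.2).rank *
      (of fun b (ac : α × γ) => M (ac.1, b) ac.2).rank := by
  set MA := of fun a (bc : β × γ) => M (a, bc.1) bc.2
  set MB := of fun b (ac : α × γ) => M (ac.1, b) ac.2
  obtain ⟨x, hx⟩ := MA.exists_fin_rank_span_rows_eq
  obtain ⟨y, hy⟩ := MB.exists_fin_rank_span_rows_eq
  set W := span 𝕜 (range fun pq : Fin MA.rank × Fin MB.rank => M (x pq.1, y pq.2))
  have slice_mem (p : Fin MA.rank) (b : β) : M (x p, b) ∈ W := by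
    have hb : MB b ∈ span 𝕜 (range fun q => MB (y q)) := hy ▸ subset_span ⟨b, rfl⟩
    have := apply_mem_span_image_of_mem_span (LinearMap.funLeft 𝕜 𝕜 fun c => (x p, c)) hb
    rw [← range_comp] at this
    exact span_le.2 (by rintro _ ⟨q, rfl⟩; exact subset_span ⟨(p, q), rfl⟩) this
  have row_mem (a : α) (b : β) : M (a, b) ∈ W := by
    have ha : MA a ∈ span 𝕜 (range fun p => MA (x p)) := hx ▸ subset_span ⟨a, rfl⟩
    have := apply_mem_span_image_of_mem_span (LinearMap.funLeft 𝕜 𝕜 fun c => (b, c)) ha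
    rw [← range_comp] at this
    exact span_le.2 (by rintro _ ⟨p, rfl⟩; exact slice_mem p b) this
  calc M.rank = Module.finrank 𝕜 (span 𝕜 (range M.row)) := M.rank_eq_finrank_span_row
    _ ≤ Module.finrank 𝕜 W :=
      finrank_mono (span_le.2 (by rintro _ ⟨⟨a, b⟩, rfl⟩; exact row_mem a b))
    _ ≤ Fintype.card (Fin MA.rank × Fin MB.rank) := finrank_range_le_card _
    _ = MA.rank * MB.rank := by simp

end Matrix

open Finset

section Flattening

variable {𝕜 : Type*} [Field 𝕜] {ι : Type*} [Fintype ι] [DecidableEq ι] (d : ι → ℕ)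
  (t : (∀ i, Fin (d i)) → 𝕜)

open Matrix

theorem flatteningRank_compl_le (S : Finset ι) :
    flatteningRank d Sᶜ t ≤ flatteningRank d S t := by
  have h : flattening d Sᶜ t = (flattening d S t)ᵀ.submatrix
      (fun a i => a ⟨i, Finset.mem_compl.2 i.2⟩)
      (fun c i => c ⟨i, fun h => Finset.mem_compl.1 h i.2⟩) := by
    ext a c
    simp only [flattening, submatrix_apply, transpose_apply]
    congr 1
    funext i
    by_cases hi : i ∈ S <;> simp [hi]
  rw [flatteningRank, h, flatteningRank, ← rank_transpose (flattening d S t)]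
  exact rank_submatrix_le _ _ _

theorem flatteningRank_compl (S : Finset ι) : flatteningRank d Sᶜ t = flatteningRank d S t :=
  (flatteningRank_compl_le d t S).antisymm (by simpa using flatteningRank_compl_le d t Sᶜ)

theorem flatteningRank_empty_le_one : flatteningRank d ∅ t ≤ 1 :=
  (rank_le_card_height _).trans_eq Fintype.card_unique

theorem flatteningRank_univ_le_one : flatteningRank d Finset.univ t ≤ 1 := by
  rw [← flatteningRank_compl, Finset.compl_univ]
  exact flatteningRank_empty_le_one d t

theorem flatteningRank_eq_zero_iff (S : Finset ι) : flatteningRank d S t = 0 ↔ t = 0 := by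
  rw [flatteningRank, Matrix.rank_eq_zero_iff]
  refine ⟨fun h => funext fun x => ?_, fun h => h ▸ rfl⟩
  simpa [flattening] using congr_fun₂ h (fun i => x i) (fun i => x i)

theorem flatteningRank_union_le {A B : Finset ι} (hAB : Disjoint A B) :
    flatteningRank d (A ∪ B) t ≤ flatteningRank d A t * flatteningRank d B t := by
  let M : Matrix ((∀ i : {i // i ∈ A}, Fin (d i)) × (∀ i : {i // i ∈ B}, Fin (d i)))
      (∀ i : {i // i ∉ A ∪ B}, Fin (d i)) 𝕜 :=
    of fun ab c => t fun i =>
      if hA : i ∈ A then ab.1 ⟨i, hA⟩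
      else if hB : i ∈ B then ab.2 ⟨i, hB⟩ else c ⟨i, by simp [hA, hB]⟩
  have hU : flattening d (A ∪ B) t = M.submatrix
      (fun u => (fun i => u ⟨i, mem_union_left _ i.2⟩, fun i => u ⟨i, mem_union_right _ i.2⟩))
      id := by
    ext u c
    simp only [flattening, M, submatrix_apply, of_apply, id]
    congr 1
    funext i
    by_cases hA : i ∈ A <;> by_cases hB : i ∈ B <;> simp [hA, hB]
  have hMA : (of fun a (bc : _ × _) => M (a, bc.1) bc.2) = (flattening d A t).submatrix id
      (fun bc i => if hB : i.1 ∈ B then bc.1 ⟨i, hB⟩ else bc.2 ⟨i, by simp [i.2, hB]⟩) :=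
    rfl
  have hMB : (of fun b (ac : _ × _) => M (ac.1, b) ac.2) = (flattening d B t).submatrix id
      (fun ac i => if hA : i.1 ∈ A then ac.1 ⟨i, hA⟩ else ac.2 ⟨i, by simp [i.2, hA]⟩) := by
    ext b ac
    simp only [flattening, M, submatrix_apply, of_apply, id]
    congr 1
    funext i
    by_cases hA : i ∈ A
    · simp [hA, disjoint_left.1 hAB hA]
    · by_cases hB : i ∈ B <;> simp [hA, hB]
  calc flatteningRank d (A ∪ B) t ≤ M.rank := by
        rw [flatteningRank, hU]
        exact rank_submatrix_le _ _ _
    _ ≤ _ := M.rank_prod_rows_le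
    _ ≤ flatteningRank d A t * flatteningRank d B t := by
      rw [hMA, hMB]
      exact Nat.mul_le_mul (rank_submatrix_le _ _ _) (rank_submatrix_le _ _ _)

theorem flatteningRank_biUnion_le {α : Type*} [DecidableEq α] {F : Finset α}
    {P : α → Finset ι} (hP : (F : Set α).PairwiseDisjoint P) {r : ℕ}
    (hr : ∀ a ∈ F, flatteningRank d (P a) t ≤ r) :
    flatteningRank d (F.biUnion P) t ≤ r ^ F.card := by
  induction F using Finset.induction_on with
  | empty => simpa using flatteningRank_empty_le_one d t
  | insert a F ha ih =>
    rw [coe_insert, Set.pairwiseDisjoint_insert] at hP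
    rw [biUnion_insert, card_insert_of_notMem ha, pow_succ']
    refine (flatteningRank_union_le d t ?_).trans (Nat.mul_le_mul (hr a (mem_insert_self a F))
      (ih hP.1 fun b hb => hr b (mem_insert_of_mem hb)))
    exact (disjoint_biUnion_right _ _ _).2 fun b hb => hP.2 b hb (ne_of_mem_of_not_mem hb ha).symm

end Flattening

namespace Nat

theorem div_two_pow_eq_of_le {i j s s' : ℕ} (hs : s ≤ s') (h : i / 2 ^ s = j / 2 ^ s) :
    i / 2 ^ s' = j / 2 ^ s' := by
  obtain ⟨u, rfl⟩ := Nat.exists_eq_add_of_le hs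
  simp only [pow_add, ← Nat.div_div_eq_div_mul, h]

/-- `s` is the highest bit in which `i` and `j` differ. -/
theorem lt_iff_exists_div_two_pow {i j : ℕ} :
    i < j ↔ ∃ s, i / 2 ^ s % 2 = 0 ∧ j / 2 ^ s = i / 2 ^ s + 1 := by
  refine ⟨fun h => ?_, fun ⟨s, _, hs⟩ => Nat.lt_of_div_lt_div (c := 2 ^ s) (hs ▸ lt_add_one _)⟩
  induction j using Nat.strong_induction_on generalizing i with
  | _ j ih =>
    by_cases hij : i / 2 = j / 2
    · exact ⟨0, by simp only [pow_zero, Nat.div_one]; omega⟩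
    · obtain ⟨s, hs⟩ := ih (j / 2) (by omega) (show i / 2 < j / 2 by omega)
      exact ⟨s + 1, by simpa only [pow_succ', ← Nat.div_div_eq_div_mul] using hs⟩

theorem eq_of_div_two_pow_eq_add_one {i j s s' : ℕ} (hs : i / 2 ^ s % 2 = 0)
    (h : j / 2 ^ s = i / 2 ^ s + 1) (hs' : i / 2 ^ s' % 2 = 0)
    (h' : j / 2 ^ s' = i / 2 ^ s' + 1) : s = s' := by
  by_contra hne
  wlog hlt : s < s' generalizing s s'
  · exact this hs' h' hs h (Ne.symm hne) (by omega)
  have hsucc : i / 2 ^ (s + 1) = j / 2 ^ (s + 1) := by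
    rw [pow_succ, ← Nat.div_div_eq_div_mul, ← Nat.div_div_eq_div_mul, h]
    omega
  have := div_two_pow_eq_of_le hlt hsucc
  omega

theorem lt_of_div_two_pow_pos {n s k : ℕ} (h : 0 < n / 2 ^ s) (hn : n < 2 ^ k) : s < k := by
  by_contra! hks
  rw [Nat.div_eq_of_lt (hn.trans_le (Nat.pow_le_pow_right two_pos hks))] at h
  exact h.false

theorem mod_two_eq_zero_and_eq_add_one_iff {p q : ℕ} :
    p % 2 = 0 ∧ q = p + 1 ↔ q % 2 = 1 ∧ p = q - 1 := by
  omega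

theorem div_two_pow_add_two_mul_two_pow_le {j s k : ℕ} (hs : s < k) (hj : j < 2 ^ k)
    (heven : j / 2 ^ s % 2 = 0) : (j / 2 ^ s + 1 + 1) * 2 ^ s ≤ 2 ^ k := by
  have h2k : 2 ^ k = 2 ^ (k - s - 1) * 2 * 2 ^ s := by
    rw [← pow_succ, ← pow_add]
    congr 1
    omega
  have hq : j / 2 ^ s < 2 ^ (k - s - 1) * 2 :=
    (Nat.div_lt_iff_lt_mul (Nat.two_pow_pos s)).2 (h2k ▸ hj)
  rw [h2k]
  gcongr
  omega

end Nat

def dyadicInterval (k s m : ℕ) : Finset (Fin (2 ^ k)) :=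
  Finset.univ.filter fun i => m * 2 ^ s ≤ (i : ℕ) ∧ (i : ℕ) < (m + 1) * 2 ^ s

theorem mem_dyadicInterval {k s m : ℕ} {i : Fin (2 ^ k)} :
    i ∈ dyadicInterval k s m ↔ (i : ℕ) / 2 ^ s = m := by
  have := Nat.two_pow_pos s
  simp only [dyadicInterval, mem_filter, mem_univ, true_and, Nat.div_eq_iff this, add_one_mul]
  omega

theorem filter_lt_eq_biUnion_dyadicInterval {k j : ℕ} (hj : j < 2 ^ k) :
    Finset.univ.filter (fun i : Fin (2 ^ k) => (i : ℕ) < j) =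
      ((range k).filter fun s => j / 2 ^ s % 2 = 1).biUnion
        fun s => dyadicInterval k s (j / 2 ^ s - 1) := by
  ext i
  rw [mem_filter, Nat.lt_iff_exists_div_two_pow]
  simp only [mem_filter, mem_univ, true_and, mem_biUnion, mem_range, mem_dyadicInterval,
    Nat.mod_two_eq_zero_and_eq_add_one_iff, and_assoc]
  refine exists_congr fun s => (and_iff_right_of_imp fun ⟨hodd, _⟩ =>
    Nat.lt_of_div_two_pow_pos (Nat.pos_of_ne_zero fun h => ?_) hj).symm
  simp [h] at hodd

theorem filter_not_lt_eq_union_biUnion_dyadicInterval (k j : ℕ) :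
    Finset.univ.filter (fun i : Fin (2 ^ k) => ¬ (i : ℕ) < j) =
      dyadicInterval k 0 j ∪ ((range k).filter fun s => j / 2 ^ s % 2 = 0).biUnion
        fun s => dyadicInterval k s (j / 2 ^ s + 1) := by
  ext i
  simp only [mem_filter, mem_univ, true_and, mem_union, mem_biUnion, mem_range,
    mem_dyadicInterval, pow_zero, Nat.div_one]
  rw [not_lt, le_iff_eq_or_lt, eq_comm, Nat.lt_iff_exists_div_two_pow (i := j)]
  simp only [and_assoc]
  exact or_congr_right (exists_congr fun s => (and_iff_right_of_imp fun ⟨_, hs⟩ =>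
    Nat.lt_of_div_two_pow_pos (hs ▸ Nat.succ_pos _) i.isLt).symm)

theorem pairwiseDisjoint_dyadicInterval_one_bits (k j : ℕ) :
    ((range k).filter fun s => j / 2 ^ s % 2 = 1 : Set ℕ).PairwiseDisjoint
      fun s => dyadicInterval k s (j / 2 ^ s - 1) := by
  intro s hs s' hs' hne
  simp only [coe_filter, Set.mem_ofPred_eq] at hs hs'
  refine disjoint_left.2 fun i hi hi' => hne ?_
  rw [mem_dyadicInterval] at hi hi'
  obtain ⟨h₁, h₂⟩ := Nat.mod_two_eq_zero_and_eq_add_one_iff.2 ⟨hs.2, hi⟩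
  obtain ⟨h₁', h₂'⟩ := Nat.mod_two_eq_zero_and_eq_add_one_iff.2 ⟨hs'.2, hi'⟩
  exact Nat.eq_of_div_two_pow_eq_add_one h₁ h₂ h₁' h₂'

theorem pairwiseDisjoint_dyadicInterval_zero_bits (k j : ℕ) :
    ((range k).filter fun s => j / 2 ^ s % 2 = 0 : Set ℕ).PairwiseDisjoint
      fun s => dyadicInterval k s (j / 2 ^ s + 1) := by
  intro s hs s' hs' hne
  simp only [coe_filter, Set.mem_ofPred_eq] at hs hs'
  refine disjoint_left.2 fun i hi hi' => hne ?_
  rw [mem_dyadicInterval] at hi hi'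
  exact Nat.eq_of_div_two_pow_eq_add_one hs.2 hi hs'.2 hi'

section DyadicBounds

variable {𝕜 : Type*} [Field 𝕜] {k : ℕ} {d : Fin (2 ^ k) → ℕ} {t : (∀ i, Fin (d i)) → 𝕜}
  {r : ℕ}

theorem flatteningRank_filter_lt_le_pow_card_one_bits
    (ht : ∀ m s : ℕ, (m + 1) * 2 ^ s ≤ 2 ^ k → flatteningRank d (dyadicInterval k s m) t ≤ r)
    {j : ℕ} (hj : j < 2 ^ k) :
    flatteningRank d (Finset.univ.filter fun i : Fin (2 ^ k) => (i : ℕ) < j) t ≤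
      r ^ ((range k).filter fun s => j / 2 ^ s % 2 = 1).card := by
  rw [filter_lt_eq_biUnion_dyadicInterval hj]
  refine flatteningRank_biUnion_le d t (pairwiseDisjoint_dyadicInterval_one_bits k j)
    fun s hs => ht _ s ?_
  have hodd := (mem_filter.1 hs).2
  rw [Nat.sub_add_cancel (Nat.pos_of_ne_zero fun h => by simp [h] at hodd)]
  exact (Nat.div_mul_le_self j _).trans hj.le

theorem flatteningRank_filter_lt_le_pow_card_zero_bits
    (ht : ∀ m s : ℕ, (m + 1) * 2 ^ s ≤ 2 ^ k → flatteningRank d (dyadicInterval k s m) t ≤ r)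
    {j : ℕ} (hj : j < 2 ^ k) :
    flatteningRank d (Finset.univ.filter fun i : Fin (2 ^ k) => (i : ℕ) < j) t ≤
      r ^ (((range k).filter fun s => j / 2 ^ s % 2 = 0).card + 1) := by
  rw [← flatteningRank_compl, compl_filter, filter_not_lt_eq_union_biUnion_dyadicInterval,
    pow_succ']
  refine (flatteningRank_union_le d t ?_).trans (Nat.mul_le_mul (ht j 0 (by simpa using hj))
    (flatteningRank_biUnion_le d t (pairwiseDisjoint_dyadicInterval_zero_bits k j)
      fun s hs => ht _ s ?_))
  · refine (disjoint_biUnion_right _ _ _).2 fun s _ => disjoint_left.2 fun i hi hi' => ?_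
    rw [mem_dyadicInterval, pow_zero, Nat.div_one] at hi
    rw [mem_dyadicInterval, hi] at hi'
    exact Nat.succ_ne_self _ hi'.symm
  · obtain ⟨hs, heven⟩ := mem_filter.1 hs
    exact Nat.div_two_pow_add_two_mul_two_pow_le (mem_range.1 hs) hj heven

end DyadicBounds

/-- HF(r, k) ⊆ TT(r^⌈k/2⌉, 2^k) for the left-to-right leaf ordering: if all flattening
ranks of `t` with respect to dyadic intervals are at most `r`, then all flattening ranks of
`t` with respect to initial segments are at most `r^⌈k/2⌉`.  (Leaves are indexed by
`Fin (2^k)`, zero-based.) -/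
theorem stmt_14 {𝕜 : Type*} [Field 𝕜] (k : ℕ) (d : Fin (2 ^ k) → ℕ) (r : ℕ)
    (t : (∀ i, Fin (d i)) → 𝕜)
    (ht : ∀ m s : ℕ, (m + 1) * 2 ^ s ≤ 2 ^ k →
      flatteningRank d (Finset.univ.filter fun i : Fin (2 ^ k) =>
        m * 2 ^ s ≤ (i : ℕ) ∧ (i : ℕ) < (m + 1) * 2 ^ s) t ≤ r) :
    ∀ j ≤ 2 ^ k,
      flatteningRank d (Finset.univ.filter fun i : Fin (2 ^ k) => (i : ℕ) < j) t
        ≤ r ^ ((k + 1) / 2) := by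
  intro j hj
  obtain rfl | hr := Nat.eq_zero_or_pos r
  · have ht0 : t = 0 := (flatteningRank_eq_zero_iff d t _).1 (Nat.le_zero.1 (ht 0 k (by simp)))
    exact ((flatteningRank_eq_zero_iff d t _).2 ht0).trans_le (Nat.zero_le _)
  obtain rfl | hj := hj.eq_or_lt
  · rw [filter_true_of_mem fun i _ => i.isLt]
    exact (flatteningRank_univ_le_one d t).trans (Nat.one_le_pow _ _ hr)
  have hbits : ((range k).filter fun s => j / 2 ^ s % 2 = 1).card +
      ((range k).filter fun s => j / 2 ^ s % 2 = 0).card = k := by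
    rw [filter_congr fun s _ => Nat.mod_two_ne_one.symm, card_filter_add_card_filter_not,
      card_range]
  rcases le_or_gt ((range k).filter fun s => j / 2 ^ s % 2 = 1).card ((k + 1) / 2) with h | h
  · exact (flatteningRank_filter_lt_le_pow_card_one_bits ht hj).trans (Nat.pow_le_pow_right hr h)
  · exact (flatteningRank_filter_lt_le_pow_card_zero_bits ht hj).trans
      (Nat.pow_le_pow_right hr (by omega))
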